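/- Variation of the Laplacian in the Teichmüller parameter: for every fixed Schwartz function f on E and every θ ∈ E, the function σ ↦ (Δ̂_σ f)(θ) is smooth on ℍ, and its Wirtinger derivatives satisfy ∂_σ (Δ̂_σ f)(θ) = (Δ̂_G f)(θ) and ∂_{σ̄} (Δ̂_σ f)(θ) = (Δ̂_Ḡ f)(θ), where for σ = σ₁ + iσ₂ we write ∂_σ = ½(∂_{σ₁} − i∂_{σ₂}) and ∂_{σ̄} = ½(∂_{σ₁} + i∂_{σ₂}). -/

import Mathlib

open MeasureTheory Complex
open scoped Real RealInnerProductSpace BigOperators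

noncomputable section

/-- `ℝⁿ` as a Euclidean space. -/
abbrev EN (n : ℕ) := EuclideanSpace ℝ (Fin n)

/-- The first order operator `D f(θ) = df_θ[v] + 2πi c ⟨v,θ⟩ f(θ)`; with
`c = σ̄⁻¹` (resp. `c = σ⁻¹`) and `v = b_j` it is `D_{σ,j}` (resp. `D_{σ̄,j}`). -/
def Dop {n : ℕ} (c : ℂ) (v : EN n) (f : EN n → ℂ) : EN n → ℂ :=
  fun θ => fderiv ℝ f θ v + 2 * (π : ℂ) * I * c * (⟪v, θ⟫ : ℂ) * f θ

/-- The Gram matrix `C_{pq} = ⟨b_p, b_q⟩` of the basis `b`. -/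
def Cmat {n : ℕ} (b : Fin n → EN n) : Matrix (Fin n) (Fin n) ℝ :=
  Matrix.of fun p q => ⟪b p, b q⟫

/-- `Δ̂_G = (ik/π)(σ̄/(σ̄−σ))² Σ_{p,q} C^{pq} D_{σ,p} D_{σ,q}`. -/
def DeltaG {n : ℕ} (k : ℕ) (σ : ℂ) (b : Fin n → EN n) (f : EN n → ℂ) : EN n → ℂ :=
  fun θ => I * (k : ℂ) / (π : ℂ) * (starRingEnd ℂ σ / (starRingEnd ℂ σ - σ)) ^ 2 *
    ∑ p, ∑ q, ((Cmat b)⁻¹ p q : ℂ) *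
      Dop (starRingEnd ℂ σ)⁻¹ (b p) (Dop (starRingEnd ℂ σ)⁻¹ (b q) f) θ

/-- `Δ̂_Ḡ = −(ik/π)(σ/(σ−σ̄))² Σ_{p,q} C^{pq} D_{σ̄,p} D_{σ̄,q}`. -/
def DeltaGbar {n : ℕ} (k : ℕ) (σ : ℂ) (b : Fin n → EN n) (f : EN n → ℂ) : EN n → ℂ :=
  fun θ => -(I * (k : ℂ) / (π : ℂ)) * (σ / (σ - starRingEnd ℂ σ)) ^ 2 *
    ∑ p, ∑ q, ((Cmat b)⁻¹ p q : ℂ) *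
      Dop σ⁻¹ (b p) (Dop σ⁻¹ (b q) f) θ

/-- The Laplace operator
`Δ̂_σ = nk + (ik/π)(σσ̄/(σ̄−σ)) Σ_{p,q} C^{pq} D_{σ,p} D_{σ̄,q}`. -/
def DeltaSigma {n : ℕ} (k : ℕ) (σ : ℂ) (b : Fin n → EN n) (f : EN n → ℂ) : EN n → ℂ :=
  fun θ => (n : ℂ) * (k : ℂ) * f θ +
    I * (k : ℂ) / (π : ℂ) * (σ * starRingEnd ℂ σ / (starRingEnd ℂ σ - σ)) *
      ∑ p, ∑ q, ((Cmat b)⁻¹ p q : ℂ) *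
        Dop (starRingEnd ℂ σ)⁻¹ (b p) (Dop σ⁻¹ (b q) f) θ

variable {n : ℕ}

lemma inner_c_eq (w : EN n) : (fun x : EN n => ((⟪w, x⟫ : ℝ) : ℂ)) =
    (Complex.ofRealCLM.comp (innerSL ℝ w) : EN n →L[ℝ] ℂ) := by
  ext x; simp

lemma dop_dop_expand (f : SchwartzMap (EN n) ℂ) (c c' : ℂ) (v w θ : EN n) :
    Dop c' v (Dop c w ⇑f) θ =
      fderiv ℝ (fun x => fderiv ℝ (⇑f) x w) θ v
      + c * (2 * (π:ℂ) * I * (((⟪w, v⟫:ℝ):ℂ) * f θ + ((⟪w, θ⟫:ℝ):ℂ) * fderiv ℝ (⇑f) θ v))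
      + c' * (2 * (π:ℂ) * I * ((⟪v, θ⟫:ℝ):ℂ) * fderiv ℝ (⇑f) θ w)
      + c * c' * ((2 * (π:ℂ) * I)^2 * ((⟪v, θ⟫:ℝ):ℂ) * ((⟪w, θ⟫:ℝ):ℂ) * f θ) := by
  have hf : ContDiff ℝ 2 ⇑f := f.smooth 2
  have hfd : Differentiable ℝ ⇑f := hf.differentiable (by norm_num)
  have h1 : Differentiable ℝ (fun x : EN n => fderiv ℝ (⇑f) x w) := by
    exact ((hf.fderiv_right (m := 1) (by norm_num)).differentiable (by norm_num)).clm_apply (differentiable_const w)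
  have W : EN n →L[ℝ] ℂ := Complex.ofRealCLM.comp (innerSL ℝ w)
  have h2 : Differentiable ℝ (fun x : EN n => ((⟪w, x⟫:ℝ):ℂ)) := by
    rw [inner_c_eq]; exact (Complex.ofRealCLM.comp (innerSL ℝ w)).differentiable
  have hmul : HasFDerivAt (fun x : EN n => ((⟪w, x⟫:ℝ):ℂ) * f x)
      (((⟪w, θ⟫:ℝ):ℂ) • fderiv ℝ (⇑f) θ + f θ • (Complex.ofRealCLM.comp (innerSL ℝ w))) θ := by
    have hW : HasFDerivAt (fun x : EN n => ((⟪w, x⟫:ℝ):ℂ))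
        (Complex.ofRealCLM.comp (innerSL ℝ w)) θ := by
      rw [inner_c_eq]; exact (Complex.ofRealCLM.comp (innerSL ℝ w)).hasFDerivAt
    exact hW.mul (hfd θ).hasFDerivAt
  have key : fderiv ℝ (Dop c w ⇑f) θ v =
      fderiv ℝ (fun x => fderiv ℝ (⇑f) x w) θ v
      + 2 * (π:ℂ) * I * c * (((⟪w, v⟫:ℝ):ℂ) * f θ + ((⟪w, θ⟫:ℝ):ℂ) * fderiv ℝ (⇑f) θ v) := by
    have : Dop c w ⇑f = fun x => fderiv ℝ (⇑f) x w
        + (2 * (π:ℂ) * I * c) * (((⟪w, x⟫:ℝ):ℂ) * f x) := by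
      funext x; simp [Dop]; ring
    rw [this, fderiv_fun_add (h1 θ) (by exact (((h2 θ).mul (hfd θ) : DifferentiableAt ℝ (fun x : EN n => ((⟪w, x⟫:ℝ):ℂ) * f x) θ)).const_mul _)]
    rw [fderiv_const_mul (a := fun x : EN n => ((⟪w, x⟫:ℝ):ℂ) * f x) (((h2 θ).mul (hfd θ) : DifferentiableAt ℝ (fun x : EN n => ((⟪w, x⟫:ℝ):ℂ) * f x) θ)), hmul.fderiv]
    simp [smul_eq_mul]
    ring
  show fderiv ℝ (Dop c w ⇑f) θ v + 2 * (π:ℂ) * I * c' * ((⟪v, θ⟫:ℝ):ℂ) * (Dop c w ⇑f θ) = _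
  rw [key]
  simp only [Dop]
  ring


section sums
variable (b : Fin n → EN n) (f : SchwartzMap (EN n) ℂ) (θ : EN n)

def SA' : ℂ := ∑ p, ∑ q, ((Cmat b)⁻¹ p q : ℂ) *
  fderiv ℝ (fun x => fderiv ℝ (⇑f) x (b q)) θ (b p)
def SB1 : ℂ := ∑ p, ∑ q, ((Cmat b)⁻¹ p q : ℂ) *
  (2 * (π:ℂ) * I * (((⟪b q, b p⟫:ℝ):ℂ) * f θ + ((⟪b q, θ⟫:ℝ):ℂ) * fderiv ℝ (⇑f) θ (b p)))
def SB2 : ℂ := ∑ p, ∑ q, ((Cmat b)⁻¹ p q : ℂ) *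
  (2 * (π:ℂ) * I * ((⟪b p, θ⟫:ℝ):ℂ) * fderiv ℝ (⇑f) θ (b q))
def SE' : ℂ := ∑ p, ∑ q, ((Cmat b)⁻¹ p q : ℂ) *
  ((2 * (π:ℂ) * I)^2 * ((⟪b p, θ⟫:ℝ):ℂ) * ((⟪b q, θ⟫:ℝ):ℂ) * f θ)

lemma sum_expand (c c' : ℂ) :
    ∑ p, ∑ q, ((Cmat b)⁻¹ p q : ℂ) * Dop c' (b p) (Dop c (b q) ⇑f) θ =
      SA' b f θ + c * SB1 b f θ + c' * SB2 b f θ + c * c' * SE' b f θ := by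
  have h : ∀ (p q : Fin n), ((Cmat b)⁻¹ p q : ℂ) * Dop c' (b p) (Dop c (b q) ⇑f) θ =
      ((Cmat b)⁻¹ p q : ℂ) * fderiv ℝ (fun x => fderiv ℝ (⇑f) x (b q)) θ (b p)
      + c * (((Cmat b)⁻¹ p q : ℂ) *
          (2 * (π:ℂ) * I * (((⟪b q, b p⟫:ℝ):ℂ) * f θ + ((⟪b q, θ⟫:ℝ):ℂ) * fderiv ℝ (⇑f) θ (b p))))
      + c' * (((Cmat b)⁻¹ p q : ℂ) *
          (2 * (π:ℂ) * I * ((⟪b p, θ⟫:ℝ):ℂ) * fderiv ℝ (⇑f) θ (b q)))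
      + c * c' * (((Cmat b)⁻¹ p q : ℂ) *
          ((2 * (π:ℂ) * I)^2 * ((⟪b p, θ⟫:ℝ):ℂ) * ((⟪b q, θ⟫:ℝ):ℂ) * f θ)) := by
    intro p q; rw [dop_dop_expand]; ring
  simp only [SA', SB1, SB2, SE', h, Finset.sum_add_distrib, ← Finset.mul_sum]

end sums

section main
variable (k : ℕ) (b : Fin n → EN n) (f : SchwartzMap (EN n) ℂ) (θ : EN n)

/-- closed form -/
def Gfun : ℂ → ℂ := fun z =>
  (n : ℂ) * (k : ℂ) * f θ + I * (k : ℂ) / (π : ℂ) *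
    ((z * (starRingEnd ℂ z) * SA' b f θ + (starRingEnd ℂ z) * SB1 b f θ
      + z * SB2 b f θ + SE' b f θ) * ((starRingEnd ℂ z) - z)⁻¹)

lemma im_ne_zero {z : ℂ} (hz : 0 < z.im) : z ≠ 0 :=
  fun h => by simp [h] at hz
lemma conj_ne_zero {z : ℂ} (hz : 0 < z.im) : (starRingEnd ℂ z) ≠ 0 := by
  simpa using im_ne_zero hz
lemma den_ne_zero {z : ℂ} (hz : 0 < z.im) : (starRingEnd ℂ z) - z ≠ 0 := by
  intro h
  have : ((starRingEnd ℂ z) - z).im = 0 := by rw [h]; simp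
  simp [Complex.sub_im, Complex.conj_im] at this
  linarith

lemma closed_form {z : ℂ} (hz : 0 < z.im) :
    DeltaSigma k z b ⇑f θ = Gfun k b f θ z := by
  have hz0 := im_ne_zero hz
  have hc0 := conj_ne_zero hz
  have hd0 := den_ne_zero hz
  have hpi : ((π:ℝ):ℂ) ≠ 0 := by exact_mod_cast Real.pi_ne_zero
  simp only [DeltaSigma, Gfun, sum_expand]
  set t := (starRingEnd ℂ) z with ht
  field_simp


lemma gfun_contDiffOn :
    ContDiffOn ℝ (⊤ : ℕ∞) (Gfun k b f θ) {z : ℂ | 0 < z.im} := by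
  have hconj : ContDiff ℝ (⊤ : ℕ∞) (fun z : ℂ => starRingEnd ℂ z) := by
    have := (Complex.conjCLE.toContinuousLinearMap).contDiff (n := (⊤ : ℕ∞))
    exact this
  have hP : ContDiff ℝ (⊤ : ℕ∞) (fun z : ℂ => z * (starRingEnd ℂ z) * SA' b f θ
      + (starRingEnd ℂ z) * SB1 b f θ + z * SB2 b f θ + SE' b f θ) := by
    exact ((((contDiff_id.mul hconj).mul contDiff_const).add
      (hconj.mul contDiff_const)).add (contDiff_id.mul contDiff_const)).add contDiff_const
  have hQ : ContDiffOn ℝ (⊤ : ℕ∞) (fun z : ℂ => ((starRingEnd ℂ z) - z)⁻¹) {z : ℂ | 0 < z.im} := by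
    exact (hconj.sub contDiff_id).contDiffOn.inv fun x hx => den_ne_zero hx
  exact contDiffOn_const.add (contDiffOn_const.mul (hP.contDiffOn.mul hQ))

set_option maxHeartbeats 1000000 in
lemma gfun_hasFDerivAt {σ : ℂ} (hσ : 0 < σ.im) :
    HasFDerivAt (Gfun k b f θ)
      ((I * (k : ℂ) / (π : ℂ)) •
        (((σ * (starRingEnd ℂ σ) * SA' b f θ + (starRingEnd ℂ σ) * SB1 b f θ
              + σ * SB2 b f θ + SE' b f θ) •
            ((((1 : ℂ →L[ℂ] ℂ).smulRight (-(((starRingEnd ℂ σ) - σ) ^ 2)⁻¹)).restrictScalars ℝ).comp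
              (Complex.conjCLE.toContinuousLinearMap - ContinuousLinearMap.id ℝ ℂ)))
          + (((starRingEnd ℂ σ) - σ)⁻¹) •
            ((SA' b f θ) • (σ • (Complex.conjCLE.toContinuousLinearMap : ℂ →L[ℝ] ℂ)
                + (starRingEnd ℂ σ) • (ContinuousLinearMap.id ℝ ℂ))
              + (SB1 b f θ) • (Complex.conjCLE.toContinuousLinearMap : ℂ →L[ℝ] ℂ)
              + (SB2 b f θ) • (ContinuousLinearMap.id ℝ ℂ)))) σ := by
  have hL : HasFDerivAt (fun z : ℂ => starRingEnd ℂ z)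
      (Complex.conjCLE.toContinuousLinearMap : ℂ →L[ℝ] ℂ) σ := by
    have := (Complex.conjCLE.toContinuousLinearMap).hasFDerivAt (x := σ)
    exact this
  have hden : HasFDerivAt (fun z : ℂ => starRingEnd ℂ z - z)
      (Complex.conjCLE.toContinuousLinearMap - ContinuousLinearMap.id ℝ ℂ) σ :=
    hL.sub (hasFDerivAt_id σ)
  have h0 : HasFDerivAt (fun y : ℂ => y⁻¹)
      (((1 : ℂ →L[ℂ] ℂ).smulRight (-(((starRingEnd ℂ σ) - σ) ^ 2)⁻¹)).restrictScalars ℝ)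
      ((starRingEnd ℂ σ) - σ) :=
    (hasDerivAt_inv (den_ne_zero hσ)).hasFDerivAt.restrictScalars ℝ
  have hinv : HasFDerivAt (fun z : ℂ => ((starRingEnd ℂ z) - z)⁻¹)
      ((((1 : ℂ →L[ℂ] ℂ).smulRight (-(((starRingEnd ℂ σ) - σ) ^ 2)⁻¹)).restrictScalars ℝ).comp
        (Complex.conjCLE.toContinuousLinearMap - ContinuousLinearMap.id ℝ ℂ)) σ :=
by
    have := HasFDerivAt.comp (f := fun z : ℂ => starRingEnd ℂ z - z) σ h0 hden
    exact this
  have h1 : HasFDerivAt (fun z : ℂ => z * (starRingEnd ℂ z))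
      (σ • (Complex.conjCLE.toContinuousLinearMap : ℂ →L[ℝ] ℂ)
        + (starRingEnd ℂ σ) • (ContinuousLinearMap.id ℝ ℂ)) σ := by
    exact (hasFDerivAt_id σ).mul hL
  have hP : HasFDerivAt (fun z : ℂ => z * (starRingEnd ℂ z) * SA' b f θ
      + (starRingEnd ℂ z) * SB1 b f θ + z * SB2 b f θ + SE' b f θ)
      ((SA' b f θ) • (σ • (Complex.conjCLE.toContinuousLinearMap : ℂ →L[ℝ] ℂ)
          + (starRingEnd ℂ σ) • (ContinuousLinearMap.id ℝ ℂ))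
        + (SB1 b f θ) • (Complex.conjCLE.toContinuousLinearMap : ℂ →L[ℝ] ℂ)
        + (SB2 b f θ) • (ContinuousLinearMap.id ℝ ℂ)) σ := by
    exact (((h1.mul_const (SA' b f θ)).add (hL.mul_const (SB1 b f θ))).add
      ((hasFDerivAt_id σ).mul_const (SB2 b f θ))).add_const (SE' b f θ)
  have hfin := ((hP.mul hinv).const_mul (I * (k : ℂ) / (π : ℂ))).const_add
    ((n : ℂ) * (k : ℂ) * f θ)
  exact hfin


lemma deltaG_expand {σ : ℂ} :
    DeltaG k σ b ⇑f θ = I * (k : ℂ) / (π : ℂ) * (starRingEnd ℂ σ / (starRingEnd ℂ σ - σ)) ^ 2 *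
      (SA' b f θ + (starRingEnd ℂ σ)⁻¹ * SB1 b f θ + (starRingEnd ℂ σ)⁻¹ * SB2 b f θ
        + (starRingEnd ℂ σ)⁻¹ * (starRingEnd ℂ σ)⁻¹ * SE' b f θ) := by
  simp only [DeltaG, sum_expand]

lemma deltaGbar_expand {σ : ℂ} :
    DeltaGbar k σ b ⇑f θ = -(I * (k : ℂ) / (π : ℂ)) * (σ / (σ - starRingEnd ℂ σ)) ^ 2 *
      (SA' b f θ + σ⁻¹ * SB1 b f θ + σ⁻¹ * SB2 b f θ + σ⁻¹ * σ⁻¹ * SE' b f θ) := by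
  simp only [DeltaGbar, sum_expand]

end main

set_option maxHeartbeats 1000000 in

/-- variation of the Laplacian in the Teichmüller parameter: for a
fixed Schwartz function `f` and `θ ∈ E`, the map `σ ↦ (Δ̂_σ f)(θ)` is smooth on
`ℍ` and its Wirtinger derivatives satisfy `∂_σ (Δ̂_σ f)(θ) = (Δ̂_G f)(θ)` and
`∂_{σ̄} (Δ̂_σ f)(θ) = (Δ̂_Ḡ f)(θ)`, where `∂_σ = ½(∂_{σ₁} − i∂_{σ₂})` and
`∂_{σ̄} = ½(∂_{σ₁} + i∂_{σ₂})` for `σ = σ₁ + iσ₂`. -/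
theorem laplacian_variation
    (n : ℕ) (k : ℕ) (hk : 0 < k) (b : Module.Basis (Fin n) ℝ (EN n))
    (f : SchwartzMap (EN n) ℂ) (θ : EN n) :
    ContDiffOn ℝ (⊤ : ℕ∞) (fun σ : ℂ => DeltaSigma k σ ⇑b ⇑f θ) {σ : ℂ | 0 < σ.im} ∧
    ∀ σ : ℂ, 0 < σ.im →
      (1 / 2 : ℂ) *
          (fderiv ℝ (fun σ' : ℂ => DeltaSigma k σ' ⇑b ⇑f θ) σ 1 -
            I * fderiv ℝ (fun σ' : ℂ => DeltaSigma k σ' ⇑b ⇑f θ) σ I) =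
        DeltaG k σ ⇑b ⇑f θ ∧
      (1 / 2 : ℂ) *
          (fderiv ℝ (fun σ' : ℂ => DeltaSigma k σ' ⇑b ⇑f θ) σ 1 +
            I * fderiv ℝ (fun σ' : ℂ => DeltaSigma k σ' ⇑b ⇑f θ) σ I) =
        DeltaGbar k σ ⇑b ⇑f θ := by
  have hopen : IsOpen {σ : ℂ | 0 < σ.im} := by
    exact isOpen_lt continuous_const Complex.continuous_im
  constructor
  · exact (gfun_contDiffOn k ⇑b f θ).congr fun z hz => closed_form k ⇑b f θ hz
  · intro σ hσ
    have hev : (fun σ' : ℂ => DeltaSigma k σ' ⇑b ⇑f θ) =ᶠ[nhds σ] Gfun k ⇑b f θ :=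
      Filter.eventuallyEq_of_mem (hopen.mem_nhds hσ) fun z hz => closed_form k ⇑b f θ hz
    have hfd : fderiv ℝ (fun σ' : ℂ => DeltaSigma k σ' ⇑b ⇑f θ) σ
        = fderiv ℝ (Gfun k ⇑b f θ) σ := hev.fderiv_eq
    have hG := (gfun_hasFDerivAt k ⇑b f θ hσ).fderiv
    rw [hfd, hG]
    have hz0 := im_ne_zero hσ
    have hc0 := conj_ne_zero hσ
    have hd0 := den_ne_zero hσ
    have hpi : ((π:ℝ):ℂ) ≠ 0 := by exact_mod_cast Real.pi_ne_zero
    simp only [ContinuousLinearMap.smul_apply, ContinuousLinearMap.add_apply,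
      ContinuousLinearMap.comp_apply, ContinuousLinearMap.sub_apply,
      ContinuousLinearMap.coe_restrictScalars', ContinuousLinearMap.smulRight_apply,
      ContinuousLinearMap.one_apply, ContinuousLinearMap.id_apply,
      ContinuousLinearEquiv.coe_coe, Complex.conjCLE_apply, map_one, Complex.conj_I,
      smul_eq_mul, deltaG_expand, deltaGbar_expand]
    set t := (starRingEnd ℂ) σ with ht
    have hcol : ∀ z : ℂ, I * (I * (k:ℂ) / ((π:ℝ):ℂ) * z) = -((k:ℂ) / ((π:ℝ):ℂ) * z) := by
      intro z
      rw [show I * (I * (k:ℂ) / ((π:ℝ):ℂ) * z)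
        = (I * I) * ((k:ℂ) / ((π:ℝ):ℂ) * z) from by ring, Complex.I_mul_I]
      ring
    simp only [hcol]
    obtain ⟨d, hd⟩ : ∃ d : ℂ, t = σ + d := ⟨t - σ, by ring⟩
    have hdne : d ≠ 0 := by
      intro h; apply hd0; rw [hd, h]; ring
    have htne : σ + d ≠ 0 := by rw [← hd]; exact hc0
    rw [hd]
    have hsub : σ + d - σ = d := by ring
    rw [hsub]
    constructor
    · field_simp [hz0, hdne, htne, hpi]
      ring_nf
    · field_simp [hz0, hdne, htne, hpi]
      ring_nf


end
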